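/- Let d ≥ 1 and let v_1, ..., v_{d(d+1)/2} be unit vectors in ℝ^d that are equiangular with common angle β = 1/√(d+2). Then there exist complex numbers z_1, ..., z_{d(d+1)/2} with |z_i| = 1 such that the matrices U_i := I_d − (1−z_i)·v_i v_iᵀ ∈ M_d(ℂ) are unitary and satisfy tr(U_i* U_j) = 0 for all i ≠ j, if and only if d ≤ 3. -/

import Mathlib

open Matrix

/-- The complex rank-one projection `v vᵀ` associated to a real vector `v`. -/
noncomputable def realProj {d : ℕ} (v : Fin d → ℝ) : Matrix (Fin d) (Fin d) ℂ :=
  (Matrix.vecMulVec v v).map Complex.ofReal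

/-!
Write `P_v = v vᵀ` and `a = 1 - z`. For unit vectors `u, w` one computes
`tr((1 - a P_u)ᴴ (1 - b P_w)) = d - ā - b + ā b ⟨u, w⟩²`, and `⟨u, w⟩² = 1/(d+2)` for distinct lines.
For fixed `b` with `|b| ≤ 2 < d + 2` this is an injective affine function of `ā`, so if three of the
`U_i` are mutually trace-orthogonal then two of them have the same `z`, and their orthogonality
reads `Re(1 - z) = d(d+2)/(2(d+1))`. A unimodular `z` has `0 ≤ Re(1 - z) ≤ 2`, so this is solvable
exactly when `d(d+2) ≤ 4(d+1)`, i.e. `d ≤ 3`; conversely, one solution `z` used for every line works.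
-/

open Complex ComplexConjugate

theorem Complex.exists_norm_eq_one_re_eq_iff {x : ℝ} :
    (∃ z : ℂ, ‖z‖ = 1 ∧ z.re = x) ↔ -1 ≤ x ∧ x ≤ 1 := by
  constructor
  · rintro ⟨z, hz, rfl⟩
    exact abs_le.1 (hz ▸ abs_re_le_norm z)
  · rintro ⟨h₁, h₂⟩
    exact ⟨exp (Real.arccos x * I), norm_exp_ofReal_mul_I _, by
      rw [exp_ofReal_mul_I_re, Real.cos_arccos h₁ h₂]⟩

theorem IsIdempotentElem.one_sub_smul_mul_one_sub_smul {R A : Type*} [CommRing R] [Ring A]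
    [Algebra R A] {p : A} (hp : IsIdempotentElem p) (a b : R) :
    (1 - (1 - a) • p) * (1 - (1 - b) • p) = 1 - (1 - a * b) • p := by
  simp only [sub_mul, mul_sub, one_mul, mul_one, smul_mul_smul_comm, hp.eq]
  module

section RealProj

variable {d : ℕ}

theorem realProj_conjTranspose (v : Fin d → ℝ) : (realProj v)ᴴ = realProj v := by
  ext i j
  simp [realProj, conjTranspose_apply, vecMulVec_apply, mul_comm]

theorem realProj_mul_realProj (u w : Fin d → ℝ) :
    realProj u * realProj w = (vecMulVec u ((u ⬝ᵥ w) • w)).map ofReal := by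
  rw [realProj, realProj, ← vecMulVec_mul_vecMulVec]
  exact (Matrix.map_mul (f := ofRealHom)).symm

theorem isIdempotentElem_realProj {v : Fin d → ℝ} (hv : v ⬝ᵥ v = 1) :
    IsIdempotentElem (realProj v) := by
  rw [IsIdempotentElem, realProj_mul_realProj, hv, one_smul, realProj]

theorem trace_realProj (v : Fin d → ℝ) : trace (realProj v) = ((v ⬝ᵥ v : ℝ) : ℂ) := by
  rw [← trace_vecMulVec]
  exact (AddMonoidHom.map_trace ofRealHom _).symm

theorem trace_realProj_mul_realProj (u w : Fin d → ℝ) :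
    trace (realProj u * realProj w) = (((u ⬝ᵥ w) ^ 2 : ℝ) : ℂ) := by
  rw [realProj_mul_realProj, sq, ← smul_eq_mul, ← dotProduct_smul, ← trace_vecMulVec]
  exact (AddMonoidHom.map_trace ofRealHom _).symm

theorem one_sub_smul_realProj_mem_unitaryGroup {v : Fin d → ℝ} (hv : v ⬝ᵥ v = 1) {z : ℂ}
    (hz : ‖z‖ = 1) : 1 - (1 - z) • realProj v ∈ unitaryGroup (Fin d) ℂ := by
  have hstar : star (1 - (1 - z) • realProj v) = 1 - (1 - conj z) • realProj v := by
    rw [star_eq_conjTranspose, conjTranspose_sub, conjTranspose_one, conjTranspose_smul,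
      realProj_conjTranspose, star_sub, star_one]
    rfl
  rw [mem_unitaryGroup_iff', hstar, (isIdempotentElem_realProj hv).one_sub_smul_mul_one_sub_smul,
    conj_mul', hz]
  simp

end RealProj

def tracePairing (d : ℕ) (c : ℝ) (a b : ℂ) : ℂ := d - conj a - b + conj a * b * c

theorem trace_one_sub_smul_realProj_conjTranspose_mul {d : ℕ} {u w : Fin d → ℝ}
    (hu : u ⬝ᵥ u = 1) (hw : w ⬝ᵥ w = 1) (a b : ℂ) :
    trace ((1 - a • realProj u)ᴴ * (1 - b • realProj w)) = tracePairing d ((u ⬝ᵥ w) ^ 2) a b := by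
  rw [conjTranspose_sub, conjTranspose_one, conjTranspose_smul, realProj_conjTranspose]
  simp only [sub_mul, mul_sub, one_mul, mul_one, smul_mul_smul_comm, trace_sub, trace_smul,
    trace_one, trace_realProj, trace_realProj_mul_realProj, hu, hw, Fintype.card_fin,
    smul_eq_mul, ofReal_one, tracePairing, star_def]
  ring

theorem tracePairing_left_injective {d : ℕ} {c : ℝ} {b : ℂ} (hb : b * c ≠ 1) :
    Function.Injective (tracePairing d c · b) := by
  intro a₁ a₂ h
  have hconj : (conj a₁ - conj a₂) * (b * c - 1) = 0 := by
    simp only [tracePairing] at h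
    linear_combination h
  exact (starRingEnd ℂ).injective <|
    sub_eq_zero.1 ((mul_eq_zero.1 hconj).resolve_right (sub_ne_zero.2 hb))

theorem tracePairing_one_sub_self {z : ℂ} (hz : ‖z‖ = 1) (d : ℕ) (c : ℝ) :
    tracePairing d c (1 - z) (1 - z) = ((d - 2 * (1 - c) * (1 - z.re) : ℝ) : ℂ) := by
  have hnormSq : conj (1 - z) * (1 - z) = ((2 * (1 - z.re) : ℝ) : ℂ) := by
    have hz' : z.re * z.re + z.im * z.im = 1 := by
      rw [← normSq_apply, normSq_eq_norm_sq, hz, one_pow]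
    rw [mul_comm, mul_conj, normSq_apply, sub_re, sub_im, one_re, one_im]
    congr 1
    linear_combination hz'
  have hre : conj (1 - z) + (1 - z) = ((2 * (1 - z.re) : ℝ) : ℂ) := by
    rw [add_comm, add_conj]
    simp
  rw [tracePairing]
  push_cast at hnormSq hre ⊢
  linear_combination (c : ℂ) * hnormSq - hre

theorem exists_tracePairing_one_sub_self_eq_zero_iff (d : ℕ) :
    (∃ z : ℂ, ‖z‖ = 1 ∧ tracePairing d ((d : ℝ) + 2)⁻¹ (1 - z) (1 - z) = 0) ↔ d ≤ 3 := by
  have hre : ∀ z : ℂ, ‖z‖ = 1 → (tracePairing d ((d : ℝ) + 2)⁻¹ (1 - z) (1 - z) = 0 ↔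
      z.re = 1 - d * (d + 2) / (2 * (d + 1))) := by
    intro z hz
    rw [tracePairing_one_sub_self hz, ofReal_eq_zero]
    field_simp
    constructor <;> intro h <;> linarith
  calc _ ↔ ∃ z : ℂ, ‖z‖ = 1 ∧ z.re = 1 - d * (d + 2) / (2 * (d + 1)) :=
        exists_congr fun z => and_congr_right (hre z)
    _ ↔ _ := exists_norm_eq_one_re_eq_iff
    _ ↔ d ≤ 3 := by
      rw [sub_le_self_iff, le_sub_comm, sub_neg_eq_add, div_le_iff₀ (by positivity)]
      constructor
      · rintro ⟨h, -⟩
        by_contra! hd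
        have : (4 : ℝ) ≤ d := by exact_mod_cast hd
        nlinarith
      · intro hd
        exact ⟨by interval_cases d <;> norm_num, by positivity⟩

theorem one_sub_mul_ne_one {z : ℂ} (hz : ‖z‖ = 1) {c : ℝ} (hc : |c| < 1 / 2) :
    (1 - z) * c ≠ 1 := by
  intro h
  have hnorm : ‖1 - z‖ ≤ 2 := (norm_sub_le 1 z).trans (by simp [hz]; norm_num)
  have := congrArg norm h
  rw [norm_mul, norm_real, Real.norm_eq_abs, norm_one] at this
  nlinarith [abs_nonneg c, norm_nonneg (1 - z)]

theorem tracePairing_one_sub_self_eq_zero_of_three {d : ℕ} {c : ℝ} (hc : |c| < 1 / 2)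
    {z₀ z₁ z₂ : ℂ} (hz₀ : ‖z₀‖ = 1) (h₁₀ : tracePairing d c (1 - z₁) (1 - z₀) = 0)
    (h₂₀ : tracePairing d c (1 - z₂) (1 - z₀) = 0) (h₁₂ : tracePairing d c (1 - z₁) (1 - z₂) = 0) :
    tracePairing d c (1 - z₁) (1 - z₁) = 0 := by
  have h : 1 - z₁ = 1 - z₂ :=
    tracePairing_left_injective (one_sub_mul_ne_one hz₀ hc) (h₁₀.trans h₂₀.symm)
  rwa [← h] at h₁₂

theorem equiangular_lines_unitaries_iff_dim_le_three_general
    {d : ℕ} (v : Fin (d * (d + 1) / 2) → (Fin d → ℝ))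
    (hunit : ∀ i, v i ⬝ᵥ v i = 1)
    (hang : ∀ i j, i ≠ j → |v i ⬝ᵥ v j| = 1 / Real.sqrt ((d : ℝ) + 2)) :
    (∃ z : Fin (d * (d + 1) / 2) → ℂ, (∀ i, ‖z i‖ = 1) ∧
      (∀ i, (1 - (1 - z i) • realProj (v i)) ∈ Matrix.unitaryGroup (Fin d) ℂ) ∧
      (∀ i j, i ≠ j →
        Matrix.trace ((1 - (1 - z i) • realProj (v i))ᴴ * (1 - (1 - z j) • realProj (v j))) = 0))
    ↔ d ≤ 3 := by
  have htrace : ∀ i j, i ≠ j → ∀ a b : ℂ, trace ((1 - a • realProj (v i))ᴴ *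
      (1 - b • realProj (v j))) = tracePairing d ((d : ℝ) + 2)⁻¹ a b := by
    intro i j hij a b
    rw [trace_one_sub_smul_realProj_conjTranspose_mul (hunit i) (hunit j), ← sq_abs, hang i j hij,
      div_pow, Real.sq_sqrt (by positivity), one_pow, one_div]
  constructor
  · rintro ⟨z, hz, -, horth⟩
    by_contra! hd
    have hpair : ∀ i j, i ≠ j → tracePairing d ((d : ℝ) + 2)⁻¹ (1 - z i) (1 - z j) = 0 :=
      fun i j hij => (htrace i j hij _ _).symm.trans (horth i j hij)
    have hc : |((d : ℝ) + 2)⁻¹| < 1 / 2 := by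
      rw [abs_inv, abs_of_pos (by positivity), one_div]
      exact inv_strictAnti₀ two_pos (lt_add_of_pos_left 2 (Nat.cast_pos.2 (by omega)))
    have hn : 3 ≤ d * (d + 1) / 2 := by
      have : 20 ≤ d * (d + 1) := by nlinarith
      omega
    have hi : Function.Injective (Fin.castLE hn) := Fin.castLE_injective hn
    have hself := tracePairing_one_sub_self_eq_zero_of_three hc (hz (Fin.castLE hn 0))
      (hpair _ _ (hi.ne (by decide : (1 : Fin 3) ≠ 0)))
      (hpair _ _ (hi.ne (by decide : (2 : Fin 3) ≠ 0)))
      (hpair _ _ (hi.ne (by decide : (1 : Fin 3) ≠ 2)))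
    exact hd.not_ge ((exists_tracePairing_one_sub_self_eq_zero_iff d).1 ⟨_, hz _, hself⟩)
  · intro hd
    obtain ⟨z, hz, hself⟩ := (exists_tracePairing_one_sub_self_eq_zero_iff d).2 hd
    exact ⟨fun _ => z, fun _ => hz, fun i => one_sub_smul_realProj_mem_unitaryGroup (hunit i) hz,
      fun i j hij => (htrace i j hij _ _).trans hself⟩

/-- for a maximal set of d(d+1)/2 real equiangular unit vectors with common
angle 1/√(d+2), unimodular numbers z_i making U_i = I_d − (1−z_i) v_i v_iᵀ unitary and
pairwise trace-orthogonal exist if and only if d ≤ 3. -/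
theorem equiangular_lines_unitaries_iff_dim_le_three
    {d : ℕ} (hd : 1 ≤ d) (v : Fin (d * (d + 1) / 2) → (Fin d → ℝ))
    (hunit : ∀ i, v i ⬝ᵥ v i = 1)
    (hang : ∀ i j, i ≠ j → |v i ⬝ᵥ v j| = 1 / Real.sqrt ((d : ℝ) + 2)) :
    (∃ z : Fin (d * (d + 1) / 2) → ℂ, (∀ i, ‖z i‖ = 1) ∧
      (∀ i, (1 - (1 - z i) • realProj (v i)) ∈ Matrix.unitaryGroup (Fin d) ℂ) ∧
      (∀ i j, i ≠ j →
        Matrix.trace ((1 - (1 - z i) • realProj (v i))ᴴ * (1 - (1 - z j) • realProj (v j))) = 0))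
    ↔ d ≤ 3 :=
  equiangular_lines_unitaries_iff_dim_le_three_general v hunit hang
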